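/- arXiv:1002.0295 — 4 statements merged into one kernel-verified Lean document; each statement's English description precedes it below -/
import Mathlib

section
/- Let C be a nonzero linear code over F_q and C_r its lift to F_{q^r}. Every codeword c of C_r of minimum (nonzero) weight is of the form c = β·c′ for some β ∈ F_{q^r} and some codeword c′ of C of minimum weight. -/
/-!
Choose an `F`-linear functional `f : K → F` that does not vanish at some nonzero coordinate
`c j₀`. Since `f` commutes with the parity checks, `f ∘ c` is a nonzero codeword of `C` supported
inside the support of `c`; as weights are preserved by `F ↪ K`, it has minimum weight in `C`.
Then `c - β (f ∘ c)`, with `β` chosen to kill coordinate `j₀`, is a codeword of `C_r` with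
strictly smaller support than `c`, hence zero.
-/

open Matrix

section Support

variable {ι : Type*} [Fintype ι] {β γ : ι → Type*} [∀ i, Zero (β i)] [∀ i, DecidableEq (β i)]
  [∀ i, Zero (γ i)] [∀ i, DecidableEq (γ i)]

theorem hammingNorm_le_of_forall_eq_zero {x : ∀ i, β i} {y : ∀ i, γ i}
    (h : ∀ i, x i = 0 → y i = 0) : hammingNorm y ≤ hammingNorm x :=
  Finset.card_le_card fun i hi => by
    simp only [Finset.mem_filter, Finset.mem_univ, true_and] at hi ⊢
    exact mt (h i) hi

theorem hammingNorm_lt_of_forall_eq_zero {x : ∀ i, β i} {y : ∀ i, γ i}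
    (h : ∀ i, x i = 0 → y i = 0) {i₀ : ι} (hx : x i₀ ≠ 0) (hy : y i₀ = 0) :
    hammingNorm y < hammingNorm x := by
  refine Finset.card_lt_card ⟨fun i hi => ?_, fun hsub => ?_⟩
  · simp only [Finset.mem_filter, Finset.mem_univ, true_and] at hi ⊢
    exact mt (h i) hi
  · simpa [hy, hx] using @hsub i₀

end Support

def IsMinWeightCodeword {ι K : Type*} [Fintype ι] [Semiring K] [DecidableEq K]
    (C : Submodule K (ι → K)) (c : ι → K) : Prop :=
  c ∈ C ∧ c ≠ 0 ∧ ∀ u ∈ C, u ≠ 0 → hammingNorm c ≤ hammingNorm u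

theorem IsMinWeightCodeword.exists_eq_smul {ι K : Type*} [Fintype ι] [DivisionRing K]
    [DecidableEq K] {C : Submodule K (ι → K)} {c d : ι → K} (hc : IsMinWeightCodeword C c)
    (hd : d ∈ C) (hd0 : d ≠ 0) (hsupp : ∀ i, c i = 0 → d i = 0) : ∃ β : K, c = β • d := by
  obtain ⟨i₀, hi₀⟩ := Function.ne_iff.mp hd0
  set β := c i₀ / d i₀
  have hw : c - β • d ∈ C := C.sub_mem hc.1 (C.smul_mem β hd)
  have hwi₀ : (c - β • d) i₀ = 0 := by simp [β, div_mul_cancel₀ _ hi₀]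
  refine ⟨β, sub_eq_zero.mp (by_contra fun hw0 => ?_)⟩
  have hsupp' : ∀ i, c i = 0 → (c - β • d) i = 0 := fun i hi => by simp [hi, hsupp i hi]
  have hci₀ : c i₀ ≠ 0 := mt (hsupp i₀) hi₀
  exact (hc.2.2 _ hw hw0).not_gt (hammingNorm_lt_of_forall_eq_zero hsupp' hci₀ hwi₀)

theorem Matrix.mulVec_comp_linearMap {m ι F K : Type*} [Fintype ι] [CommSemiring F] [Semiring K]
    [Algebra F K] (H : Matrix m ι F) (f : K →ₗ[F] F) (v : ι → K) :
    H *ᵥ (f ∘ v) = f ∘ (H.map (algebraMap F K) *ᵥ v) := by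
  ext i
  simp [Matrix.mulVec, dotProduct, map_sum, ← Algebra.smul_def]

theorem Matrix.map_mulVec_comp {m ι R S : Type*} [Fintype ι] [NonAssocSemiring R]
    [NonAssocSemiring S] (φ : R →+* S) (H : Matrix m ι R) (u : ι → R) :
    H.map φ *ᵥ (φ ∘ u) = φ ∘ (H *ᵥ u) :=
  funext fun i => (φ.map_mulVec H u i).symm

theorem algebraMap_comp_ne_zero {ι F K : Type*} [Field F] [Semiring K] [Nontrivial K]
    [Algebra F K] {u : ι → F} (hu : u ≠ 0) : algebraMap F K ∘ u ≠ 0 :=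
  let ⟨i, hi⟩ := Function.ne_iff.mp hu
  Function.ne_iff.mpr ⟨i, by simpa using hi⟩

theorem IsMinWeightCodeword.comp_dual {m ι F K : Type*} [Fintype ι] [Field F] [DecidableEq F]
    [CommRing K] [Nontrivial K] [DecidableEq K] [Algebra F K] (H : Matrix m ι F) {c : ι → K}
    (hc : IsMinWeightCodeword (LinearMap.ker (H.map (algebraMap F K)).mulVecLin) c)
    (f : Module.Dual F K) (hf : f ∘ c ≠ 0) :
    IsMinWeightCodeword (LinearMap.ker H.mulVecLin) (f ∘ c) := by
  have hcC : H.map (algebraMap F K) *ᵥ c = 0 := hc.1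
  refine ⟨by simp [mulVec_comp_linearMap, hcC], hf, fun u hu hu0 => ?_⟩
  rw [LinearMap.mem_ker, mulVecLin_apply] at hu
  have hlift : H.map (algebraMap F K) *ᵥ (algebraMap F K ∘ u) = 0 := by
    simp [Matrix.map_mulVec_comp, hu]
  calc hammingNorm (f ∘ c) ≤ hammingNorm c :=
        hammingNorm_le_of_forall_eq_zero fun i hi => by simp [hi]
    _ ≤ hammingNorm (algebraMap F K ∘ u) := hc.2.2 _ hlift (algebraMap_comp_ne_zero hu0)
    _ = hammingNorm u :=
        hammingNorm_comp (fun _ => algebraMap F K) (fun _ => FaithfulSMul.algebraMap_injective F K)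
          fun _ => map_zero _

theorem lifted_min_weight_codeword_general {n k : ℕ}
    (F K : Type) [Field F] [DecidableEq F]
    [Field K] [DecidableEq K] [Algebra F K]
    (H : Matrix (Fin k) (Fin n) F)
    (c : Fin n → K) (hc : (H.map (algebraMap F K)).mulVec c = 0) (hc0 : c ≠ 0)
    (hmin : ∀ u : Fin n → K, (H.map (algebraMap F K)).mulVec u = 0 → u ≠ 0 →
      hammingNorm c ≤ hammingNorm u) :
    ∃ (β : K) (c' : Fin n → F),
      H.mulVec c' = 0 ∧ c' ≠ 0 ∧
      (∀ u : Fin n → F, H.mulVec u = 0 → u ≠ 0 → hammingNorm c' ≤ hammingNorm u) ∧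
      c = fun j => β * algebraMap F K (c' j) := by
  have hcmin : IsMinWeightCodeword (LinearMap.ker (H.map (algebraMap F K)).mulVecLin) c :=
    ⟨hc, hc0, hmin⟩
  obtain ⟨j₀, hj₀⟩ := Function.ne_iff.mp hc0
  obtain ⟨f, hf⟩ := Module.Projective.exists_dual_ne_zero F hj₀
  obtain ⟨hc'ker, hc'0, hc'min⟩ := hcmin.comp_dual H f (Function.ne_iff.mpr ⟨j₀, hf⟩)
  have hc'C : H *ᵥ (f ∘ c) = 0 := hc'ker
  obtain ⟨β, hβ⟩ := hcmin.exists_eq_smul (d := algebraMap F K ∘ f ∘ c)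
    (by simp [Matrix.map_mulVec_comp, hc'C]) (algebraMap_comp_ne_zero hc'0)
    fun i hi => by simp [hi]
  exact ⟨β, f ∘ c, hc'C, hc'0, hc'min, hβ⟩

/-- Every minimum weight codeword of the lifted code `C_r` is a scalar
multiple `β • c'` of a minimum weight codeword `c'` of the original code `C`. -/
theorem lifted_min_weight_codeword {r n k : ℕ} (hr : 2 ≤ r)
    (F K : Type) [Field F] [Fintype F] [DecidableEq F]
    [Field K] [Fintype K] [DecidableEq K] [Algebra F K]
    (hrank : Module.finrank F K = r)
    (H : Matrix (Fin k) (Fin n) F)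
    (hC : ∃ c : Fin n → F, H.mulVec c = 0 ∧ c ≠ 0)
    (c : Fin n → K) (hc : (H.map (algebraMap F K)).mulVec c = 0) (hc0 : c ≠ 0)
    (hmin : ∀ u : Fin n → K, (H.map (algebraMap F K)).mulVec u = 0 → u ≠ 0 →
      hammingNorm c ≤ hammingNorm u) :
    ∃ (β : K) (c' : Fin n → F),
      H.mulVec c' = 0 ∧ c' ≠ 0 ∧
      (∀ u : Fin n → F, H.mulVec u = 0 → u ≠ 0 → hammingNorm c' ≤ hammingNorm u) ∧
      c = fun j => β * algebraMap F K (c' j) :=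
  lifted_min_weight_codeword_general F K H c hc hc0 hmin
end

section
/- With H_m a parity check matrix of the q-ary Hamming code of length n = (q^m−1)/(q−1), and C_{(m,r)} = {x ∈ F_{q^r}^n : H_m x = 0}, for every vector v ∈ F_{q^r}^n the distance d(v, C_{(m,r)}) from v to the code equals rank(S_v), the F_q-rank of the r×m syndrome matrix of v. -/
/-!
Let `s = H v` be the syndrome and `W ⊆ K` the `F`-span of its entries, so that `rank S_v = dim_F W`.
If `H c = 0`, then `s = H (v - c)` expresses every `s_i` as an `F`-combination of the nonzero
entries of `v - c`, hence `dim_F W ≤ d(v, c)`. Conversely, expand `s = ∑ₜ aₜ wₜ` in an `F`-basis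
`(wₜ)` of `W`, with `aₜ ∈ F^m`. The `(q^m - 1)/(q - 1)` pairwise independent columns of `H` meet
every line of `F^m`, so `aₜ = cₜ Hⱼₜ`, and `e = ∑ₜ cₜ wₜ δⱼₜ` has syndrome `s` and weight at most
`dim_F W`; then `c = v - e` is a codeword at distance `≤ dim_F W` from `v`.
-/

open Module Submodule Matrix

section Hamming

variable {ι : Type*} [Fintype ι] {M : Type*} [AddCommMonoid M] [DecidableEq M]

theorem hammingNorm_add_le (x y : ι → M) :
    hammingNorm (x + y) ≤ hammingNorm x + hammingNorm y := by
  classical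
  unfold hammingNorm
  refine (Finset.card_le_card fun i hi => ?_).trans (Finset.card_union_le _ _)
  simp only [Finset.mem_filter, Finset.mem_univ, true_and, Finset.mem_union, Pi.add_apply] at hi ⊢
  by_contra! h
  exact hi (by rw [h.1, h.2, add_zero])

theorem hammingNorm_sum_le {τ : Type*} (s : Finset τ) (x : τ → ι → M) :
    hammingNorm (∑ t ∈ s, x t) ≤ ∑ t ∈ s, hammingNorm (x t) := by
  classical
  induction s using Finset.induction_on with
  | empty => simp
  | insert t s ht ih =>
    rw [Finset.sum_insert ht, Finset.sum_insert ht]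
    exact (hammingNorm_add_le _ _).trans (Nat.add_le_add_left ih _)

theorem hammingDist_eq_hammingNorm_sub {β : Type*} [AddCommGroup β] [DecidableEq β]
    (x y : ι → β) : hammingDist x y = hammingNorm (x - y) := by
  rw [hammingDist_comm, hammingDist_eq_hammingNorm, neg_add_eq_sub]

end Hamming

section Lift

variable {F K : Type*} [Field F] [Field K] [Algebra F K]
  {m : Type*} {ι : Type*} [Fintype ι]

theorem Matrix.map_algebraMap_mulVec_apply (A : Matrix m ι F) (e : ι → K) (i : m) :
    (A.map (algebraMap F K) *ᵥ e) i = ∑ j, A i j • e j := by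
  simp [Matrix.mulVec, dotProduct, Algebra.smul_def]

theorem finrank_span_range_map_algebraMap_mulVec_le [DecidableEq K] (A : Matrix m ι F)
    (e : ι → K) :
    finrank F (span F (Set.range (A.map (algebraMap F K) *ᵥ e))) ≤ hammingNorm e := by
  have hsupp : Fintype.card {j // e j ≠ 0} = hammingNorm e := Fintype.card_subtype _
  rw [← hsupp]
  have := Module.Finite.span_of_finite F (Set.finite_range fun j : {j // e j ≠ 0} => e j)
  refine (Submodule.finrank_mono ?_).trans (finrank_range_le_card fun j : {j // e j ≠ 0} => e j)
  rw [span_le]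
  rintro _ ⟨i, rfl⟩
  rw [SetLike.mem_coe, Matrix.map_algebraMap_mulVec_apply]
  refine sum_mem fun j _ => ?_
  by_cases hj : e j = 0
  · simp [hj]
  · exact smul_mem _ _ (subset_span ⟨⟨j, hj⟩, rfl⟩)

theorem Module.Basis.rank_toMatrix [Fintype m] (b : Basis ι F K) (v : m → K) :
    (b.toMatrix v).rank = finrank F (span F (Set.range v)) := by
  rw [rank_eq_finrank_span_cols]
  have hcols : Set.range (b.toMatrix v).col = b.equivFun '' Set.range v := by
    rw [← Set.range_comp]
    rfl
  rw [hcols, ← LinearEquiv.coe_coe, span_image]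
  exact b.equivFun.finrank_map_eq _

theorem exists_map_algebraMap_mulVec_eq_hammingNorm_le_mul_finrank [DecidableEq F] [DecidableEq K]
    [Finite m] {R : ℕ} (A : Matrix m ι F)
    (hcover : ∀ u : m → F, ∃ e : ι → F, hammingNorm e ≤ R ∧ A *ᵥ e = u) (s : m → K) :
    ∃ e : ι → K, A.map (algebraMap F K) *ᵥ e = s ∧
      hammingNorm e ≤ R * finrank F (span F (Set.range s)) := by
  have := Module.Finite.span_of_finite F (Set.finite_range s)
  have hmem (i : m) : s i ∈ span F (Set.range s) := subset_span ⟨i, rfl⟩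
  let w := Module.finBasis F (span F (Set.range s))
  choose x hx_norm hx using fun t => hcover fun i => w.repr ⟨s i, hmem i⟩ t
  refine ⟨∑ t, fun j => x t j • (w t : K), ?_, ?_⟩
  · funext i
    have hs : s i = ∑ t, w.repr ⟨s i, hmem i⟩ t • (w t : K) := by
      have := congrArg Subtype.val (w.sum_repr ⟨s i, hmem i⟩)
      simp only [Submodule.coe_sum, Submodule.coe_smul] at this
      exact this.symm
    rw [map_algebraMap_mulVec_apply, hs]
    simp only [Finset.sum_apply, Finset.smul_sum, smul_smul]
    rw [Finset.sum_comm]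
    refine Finset.sum_congr rfl fun t _ => ?_
    rw [← congrFun (hx t) i]
    simp only [mulVec, dotProduct, Finset.sum_smul]
  · calc hammingNorm (∑ t, fun j => x t j • (w t : K))
        ≤ ∑ t, hammingNorm fun j => x t j • (w t : K) := hammingNorm_sum_le _ _
      _ ≤ ∑ _t, R := Finset.sum_le_sum fun t _ =>
          (hammingNorm_comp_le_hammingNorm (fun _ a => a • (w t : K)) fun _ => zero_smul _ _).trans
            (hx_norm t)
      _ = R * finrank F (span F (Set.range s)) := by simp [mul_comm]

end Lift

section HammingMatrix

variable {F : Type*} [Field F] {m n : ℕ} {H : Matrix (Fin m) (Fin n) F}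

theorem smul_col_injective_of_pairwise_independent (hcols : ∀ j, (fun i => H i j) ≠ 0)
    (hind : ∀ j₁ j₂, j₁ ≠ j₂ → ∀ c : F, (fun i => H i j₂) ≠ c • (fun i => H i j₁)) :
    Function.Injective fun p : Fin n × Fˣ => (p.2 : F) • fun i => H i p.1 := by
  rintro ⟨j₁, c₁⟩ ⟨j₂, c₂⟩ h
  simp only at h
  obtain rfl : j₁ = j₂ := by
    by_contra hj
    refine hind j₁ j₂ hj (↑c₂⁻¹ * c₁) ?_
    rw [mul_smul, h, smul_smul, Units.inv_mul, one_smul]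
  exact Prod.ext rfl (Units.ext (smul_left_injective F (hcols j₁) h))

theorem exists_smul_col_eq_of_card [Fintype F] [DecidableEq F] {q : ℕ}
    (hq : Fintype.card F = q)
    (hcols : ∀ j, (fun i => H i j) ≠ 0)
    (hind : ∀ j₁ j₂, j₁ ≠ j₂ → ∀ c : F, (fun i => H i j₂) ≠ c • (fun i => H i j₁))
    (hn : n * (q - 1) = q ^ m - 1) {u : Fin m → F} (hu : u ≠ 0) :
    ∃ j, ∃ c : F, c • (fun i => H i j) = u := by
  let f : Fin n × Fˣ → {u : Fin m → F // u ≠ 0} := fun p =>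
    ⟨(p.2 : F) • fun i => H i p.1, smul_ne_zero p.2.ne_zero (hcols p.1)⟩
  have hf : Function.Injective f := fun p₁ p₂ h =>
    smul_col_injective_of_pairwise_independent hcols hind (congrArg Subtype.val h)
  have hcard : Fintype.card (Fin n × Fˣ) = Fintype.card {u : Fin m → F // u ≠ 0} := by
    rw [Fintype.card_prod, Fintype.card_fin, Fintype.card_units, Fintype.card_subtype_compl,
      Fintype.card_subtype_eq, Fintype.card_fun, Fintype.card_fin, hq, hn]
  obtain ⟨⟨j, c⟩, hjc⟩ := ((Fintype.bijective_iff_injective_and_card f).mpr ⟨hf, hcard⟩).2 ⟨u, hu⟩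
  exact ⟨j, c, congrArg Subtype.val hjc⟩

theorem exists_hammingNorm_le_one_mulVec_eq [Fintype F] [DecidableEq F] {q : ℕ}
    (hq : Fintype.card F = q)
    (hcols : ∀ j, (fun i => H i j) ≠ 0)
    (hind : ∀ j₁ j₂, j₁ ≠ j₂ → ∀ c : F, (fun i => H i j₂) ≠ c • (fun i => H i j₁))
    (hn : n * (q - 1) = q ^ m - 1) (u : Fin m → F) :
    ∃ e : Fin n → F, hammingNorm e ≤ 1 ∧ H *ᵥ e = u := by
  rcases eq_or_ne u 0 with rfl | hu
  · exact ⟨0, by simp, mulVec_zero H⟩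
  obtain ⟨j, c, rfl⟩ := exists_smul_col_eq_of_card hq hcols hind hn hu
  refine ⟨Pi.single j c, ?_, ?_⟩
  · refine Finset.card_le_one.mpr fun a ha b hb => ?_
    simp only [Finset.mem_filter, Finset.mem_univ, true_and] at ha hb
    have hsupp (a : Fin n) (ha : (Pi.single j c : Fin n → F) a ≠ 0) : a = j :=
      by_contra fun h => ha (Pi.single_eq_of_ne (M := fun _ => F) h c)
    rw [hsupp a ha, hsupp b hb]
  · ext i
    rw [mulVec_single]
    simp [mul_comm]

end HammingMatrix

theorem dist_to_lifted_hamming_eq_syndrome_rank_general {q m r n : ℕ}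
    (F K : Type) [Field F] [Fintype F] [DecidableEq F]
    [Field K] [DecidableEq K] [Algebra F K]
    (hq : Fintype.card F = q)
    (b : Module.Basis (Fin r) F K)
    (H : Matrix (Fin m) (Fin n) F)
    (hcols : ∀ j, (fun i => H i j) ≠ 0)
    (hind : ∀ j₁ j₂, j₁ ≠ j₂ → ∀ c : F, (fun i => H i j₂) ≠ c • (fun i => H i j₁))
    (hn : n * (q - 1) = q ^ m - 1)
    (v : Fin n → K) :
    sInf {d : ℕ | ∃ c : Fin n → K,
        (H.map (algebraMap F K)).mulVec c = 0 ∧ hammingDist v c = d} =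
      (Matrix.of fun (i : Fin r) (j : Fin m) =>
        b.repr ((H.map (algebraMap F K)).mulVec v j) i).rank := by
  set s := H.map (algebraMap F K) *ᵥ v
  rw [show Matrix.of (fun i j => b.repr (s j) i) = b.toMatrix s from rfl, b.rank_toMatrix]
  apply le_antisymm
  · obtain ⟨e, he, hnorm⟩ := exists_map_algebraMap_mulVec_eq_hammingNorm_le_mul_finrank H
      (exists_hammingNorm_le_one_mulVec_eq hq hcols hind hn) s
    have hcode : H.map (algebraMap F K) *ᵥ (v - e) = 0 := by rw [mulVec_sub, he, sub_self]
    calc sInf _ ≤ hammingDist v (v - e) := Nat.sInf_le (by exact ⟨v - e, hcode, rfl⟩)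
      _ = hammingNorm e := by rw [hammingDist_eq_hammingNorm_sub, sub_sub_cancel]
      _ ≤ finrank F (span F (Set.range s)) := by simpa using hnorm
  · refine le_csInf ⟨hammingDist v 0, 0, mulVec_zero _, rfl⟩ ?_
    rintro _ ⟨c, hc, rfl⟩
    have hsyndrome : H.map (algebraMap F K) *ᵥ (v - c) = s := by rw [mulVec_sub, hc, sub_zero]
    rw [hammingDist_eq_hammingNorm_sub, ← hsyndrome]
    exact finrank_span_range_map_algebraMap_mulVec_le H (v - c)

/-- For the lifted Hamming code `C_{(m,r)}` and any `v ∈ F_{q^r}^n`,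
the distance from `v` to the code equals the `F_q`-rank of the syndrome matrix `S_v`. -/
theorem dist_to_lifted_hamming_eq_syndrome_rank {q m r n : ℕ} (hm : 1 ≤ m) (hr : 1 ≤ r)
    (F K : Type) [Field F] [Fintype F] [DecidableEq F]
    [Field K] [Fintype K] [DecidableEq K] [Algebra F K]
    (hq : Fintype.card F = q)
    (b : Module.Basis (Fin r) F K)
    (H : Matrix (Fin m) (Fin n) F)
    (hcols : ∀ j, (fun i => H i j) ≠ 0)
    (hind : ∀ j₁ j₂, j₁ ≠ j₂ → ∀ c : F, (fun i => H i j₂) ≠ c • (fun i => H i j₁))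
    (hn : n * (q - 1) = q ^ m - 1)
    (v : Fin n → K) :
    sInf {d : ℕ | ∃ c : Fin n → K,
        (H.map (algebraMap F K)).mulVec c = 0 ∧ hammingDist v c = d} =
      (Matrix.of fun (i : Fin r) (j : Fin m) =>
        b.repr ((H.map (algebraMap F K)).mulVec v j) i).rank :=
  dist_to_lifted_hamming_eq_syndrome_rank_general F K hq b H hcols hind hn v
end

section
/- The covering radius of the code C_{(m,r)} over F_{q^r} with parity check matrix H_m (the parity check matrix of the q-ary Hamming code of length n = (q^m−1)/(q−1)) equals min{r, m}. -/
/-! Every nonzero vector of `F^m` is a scalar multiple of exactly one column of `H`, since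
`(j, c) ↦ c • H.col j` is injective on `Fin n × Fˣ` and `n (q - 1) = q^m - 1`. Hence a syndrome
`s ∈ K^m` is a `K`-combination of at most `m` columns (one per coordinate of `s`), and also of at
most `r` columns (one per coordinate of `s` in an `F`-basis of `K`): every coset of the code has a
leader of weight `≤ min r m`. Conversely, the entries of `H e` lie in the `F`-span of the entries
of `e`, so a syndrome whose entries span an `F`-space of dimension `min r m` has no coset leader of
smaller weight. -/

open Matrix Module

section HammingColumns

variable {F : Type*} [Field F] [Fintype F] {m n : ℕ} (H : Matrix (Fin m) (Fin n) F)

theorem exists_smul_col_eq_of_ne_zero (hcols : ∀ j, H.col j ≠ 0)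
    (hind : ∀ j₁ j₂, j₁ ≠ j₂ → ∀ c : F, H.col j₂ ≠ c • H.col j₁)
    (hn : n * (Fintype.card F - 1) = Fintype.card F ^ m - 1)
    {u : Fin m → F} (hu : u ≠ 0) : ∃ j, ∃ c : F, c • H.col j = u := by
  classical
  let g : Fin n × Fˣ → {u : Fin m → F // u ≠ 0} := fun p =>
    ⟨(p.2 : F) • H.col p.1, smul_ne_zero p.2.ne_zero (hcols p.1)⟩
  have hg : Function.Injective g := by
    rintro ⟨j₁, c₁⟩ ⟨j₂, c₂⟩ h
    have h : (c₁ : F) • H.col j₁ = (c₂ : F) • H.col j₂ := congrArg Subtype.val h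
    by_cases hj : j₁ = j₂
    · subst hj
      have : ((c₁ : F) - c₂) • H.col j₁ = 0 := by rw [sub_smul, h, sub_self]
      have hc := (smul_eq_zero.mp this).resolve_right (hcols j₁)
      exact Prod.ext rfl (Units.ext (sub_eq_zero.mp hc))
    · refine absurd ?_ (hind j₁ j₂ hj ((c₂ : F)⁻¹ * c₁))
      rw [mul_smul, h, inv_smul_smul₀ c₂.ne_zero]
  have hcard : Fintype.card (Fin n × Fˣ) = Fintype.card {u : Fin m → F // u ≠ 0} := by
    simp [Fintype.card_units, Fintype.card_subtype_compl, hn]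
  obtain ⟨⟨j, c⟩, hjc⟩ := ((Fintype.bijective_iff_injective_and_card g).2 ⟨hg, hcard⟩).2 ⟨u, hu⟩
  exact ⟨j, c, congrArg Subtype.val hjc⟩

theorem exists_smul_col_eq (hm : 1 ≤ m) (hcols : ∀ j, H.col j ≠ 0)
    (hind : ∀ j₁ j₂, j₁ ≠ j₂ → ∀ c : F, H.col j₂ ≠ c • H.col j₁)
    (hn : n * (Fintype.card F - 1) = Fintype.card F ^ m - 1)
    (u : Fin m → F) : ∃ j, ∃ c : F, c • H.col j = u := by
  by_cases hu : u = 0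
  · obtain ⟨j, -⟩ := exists_smul_col_eq_of_ne_zero H hcols hind hn
      (Pi.single_ne_zero_iff.mpr one_ne_zero : Pi.single (⟨0, hm⟩ : Fin m) (1 : F) ≠ 0)
    exact ⟨j, 0, by rw [zero_smul, hu]⟩
  · exact exists_smul_col_eq_of_ne_zero H hcols hind hn hu

end HammingColumns

section LiftedCode

variable {F K : Type*} [Field F] [Field K] [Algebra F K] {μ κ : Type*} [Fintype κ]

theorem exists_mulVec_eq_sum_smul_col {R ι : Type*} [CommSemiring R] [DecidableEq R] [Fintype ι]
    (A : Matrix μ κ R) (j : ι → κ) (a : ι → R) :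
    ∃ e, A *ᵥ e = ∑ i, a i • A.col (j i) ∧ hammingNorm e ≤ Fintype.card ι := by
  classical
  refine ⟨∑ i, Pi.single (j i) (a i), ?_, ?_⟩
  · ext k
    simp [mulVec_sum, Finset.sum_apply, mul_comm]
  · have hsupp : ({x | (∑ i, Pi.single (j i) (a i) : κ → R) x ≠ 0} : Finset κ) ⊆
        Finset.univ.image j := by
      intro x hx
      by_contra hxj
      refine (Finset.mem_filter.mp hx).2 ?_
      simp only [Finset.sum_apply]
      refine Finset.sum_eq_zero fun i _ => Pi.single_eq_of_ne ?_ _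
      rintro rfl
      exact hxj (Finset.mem_image_of_mem j (Finset.mem_univ i))
    exact (Finset.card_le_card hsupp).trans Finset.card_image_le

theorem exists_map_mulVec_eq_sum_smul [DecidableEq K] {ι : Type*} [Fintype ι]
    (H : Matrix μ κ F) (hcover : ∀ u : μ → F, ∃ j, ∃ c : F, c • H.col j = u)
    (a : ι → K) (u : ι → μ → F) :
    ∃ e, H.map (algebraMap F K) *ᵥ e = ∑ i, a i • (algebraMap F K ∘ u i) ∧
      hammingNorm e ≤ Fintype.card ι := by
  choose j c hc using fun i => hcover (u i)
  obtain ⟨e, he, hw⟩ :=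
    exists_mulVec_eq_sum_smul_col (H.map (algebraMap F K)) j fun i => a i * algebraMap F K (c i)
  refine ⟨e, he.trans (Finset.sum_congr rfl fun i _ => ?_), hw⟩
  ext k
  simp [← hc, mul_assoc]

theorem exists_map_mulVec_eq_hammingNorm_le_finrank [DecidableEq K] [Module.Finite F K]
    (H : Matrix μ κ F) (hcover : ∀ u : μ → F, ∃ j, ∃ c : F, c • H.col j = u) (s : μ → K) :
    ∃ e, H.map (algebraMap F K) *ᵥ e = s ∧ hammingNorm e ≤ finrank F K := by
  let b := Module.finBasis F K
  obtain ⟨e, he, hw⟩ := exists_map_mulVec_eq_sum_smul H hcover b fun i k => b.repr (s k) i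
  refine ⟨e, he.trans ?_, by simpa using hw⟩
  ext k
  conv_rhs => rw [← b.sum_repr (s k)]
  simp [Finset.sum_apply, Algebra.smul_def, mul_comm]

theorem exists_map_mulVec_eq_hammingNorm_le_card [DecidableEq K] [Fintype μ]
    (H : Matrix μ κ F) (hcover : ∀ u : μ → F, ∃ j, ∃ c : F, c • H.col j = u) (s : μ → K) :
    ∃ e, H.map (algebraMap F K) *ᵥ e = s ∧ hammingNorm e ≤ Fintype.card μ := by
  classical
  obtain ⟨e, he, hw⟩ := exists_map_mulVec_eq_sum_smul H hcover s fun k => Pi.single k 1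
  refine ⟨e, he.trans ?_, hw⟩
  ext k
  simp [Finset.sum_apply, Pi.single_apply]

theorem exists_map_mulVec_eq_hammingNorm_le_min [DecidableEq K] [Fintype μ] [Module.Finite F K]
    (H : Matrix μ κ F) (hcover : ∀ u : μ → F, ∃ j, ∃ c : F, c • H.col j = u) (s : μ → K) :
    ∃ e, H.map (algebraMap F K) *ᵥ e = s ∧ hammingNorm e ≤ min (finrank F K) (Fintype.card μ) := by
  rcases le_total (finrank F K) (Fintype.card μ) with h | h
  · simpa [h] using exists_map_mulVec_eq_hammingNorm_le_finrank H hcover s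
  · simpa [h] using exists_map_mulVec_eq_hammingNorm_le_card H hcover s

theorem finrank_span_range_map_mulVec_le [DecidableEq K] (H : Matrix μ κ F) (e : κ → K) :
    (Set.range (H.map (algebraMap F K) *ᵥ e)).finrank F ≤ hammingNorm e := by
  let S : Finset κ := {x | e x ≠ 0}
  have hle : Submodule.span F (Set.range (H.map (algebraMap F K) *ᵥ e)) ≤
      Submodule.span F (S.image e : Set K) := by
    rw [Submodule.span_le]
    rintro _ ⟨k, rfl⟩
    have : (H.map (algebraMap F K) *ᵥ e) k = ∑ x ∈ S, H k x • e x := by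
      rw [Finset.sum_filter_of_ne fun x _ hx => right_ne_zero_of_smul hx]
      simp [mulVec, dotProduct, Algebra.smul_def]
    rw [this]
    exact Submodule.sum_mem _ fun x hx => Submodule.smul_mem _ _
      (Submodule.subset_span (Finset.mem_coe.mpr (Finset.mem_image_of_mem e hx)))
  calc _ ≤ (S.image e : Set K).finrank F := Submodule.finrank_mono hle
    _ ≤ (S.image e).card := finrank_span_finset_le_card _
    _ ≤ hammingNorm e := Finset.card_image_le

theorem exists_min_finrank_le_finrank_span_range [Module.Finite F K] (m : ℕ) :
    ∃ s : Fin m → K, min (finrank F K) m ≤ (Set.range s).finrank F := by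
  let b := Module.finBasis F K
  refine ⟨fun k => if h : (k : ℕ) < finrank F K then b ⟨k, h⟩ else 0, ?_⟩
  have hli : LinearIndependent F (b ∘ Fin.castLE (min_le_left (finrank F K) m)) :=
    b.linearIndependent.comp _ (Fin.castLE_injective _)
  have hsub : Set.range (b ∘ Fin.castLE (min_le_left (finrank F K) m)) ⊆
      Set.range fun k : Fin m => if h : (k : ℕ) < finrank F K then b ⟨k, h⟩ else 0 := by
    rintro _ ⟨i, rfl⟩
    exact ⟨Fin.castLE (min_le_right _ _) i, by simp [Fin.castLE, lt_min_iff.mp i.isLt]⟩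
  calc min (finrank F K) m = (Set.range (b ∘ Fin.castLE _)).finrank F := by
        rw [Set.finrank, finrank_span_eq_card hli, Fintype.card_fin]
    _ ≤ _ := Set.finrank_mono hsub

theorem setOf_hammingDist_ker_eq {R : Type*} [Ring R] [DecidableEq R] (A : Matrix μ κ R)
    (v : κ → R) :
    {d | ∃ c, A *ᵥ c = 0 ∧ hammingDist v c = d} =
      {d | ∃ e, A *ᵥ e = A *ᵥ v ∧ hammingNorm e = d} := by
  ext d
  constructor
  · rintro ⟨c, hc, rfl⟩
    refine ⟨v - c, by rw [mulVec_sub, hc, sub_zero], ?_⟩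
    rw [hammingDist_comm, hammingDist_eq_hammingNorm, neg_add_eq_sub]
  · rintro ⟨e, he, rfl⟩
    refine ⟨v - e, by rw [mulVec_sub, he, sub_self], ?_⟩
    rw [hammingDist_comm, hammingDist_eq_hammingNorm, neg_add_eq_sub, sub_sub_cancel]

end LiftedCode

theorem covering_radius_lifted_hamming_general {q m r n : ℕ} (hm : 1 ≤ m) (hr : 1 ≤ r)
    (F K : Type) [Field F] [Fintype F]
    [Field K] [DecidableEq K] [Algebra F K]
    (hq : Fintype.card F = q)
    (hrank : Module.finrank F K = r)
    (H : Matrix (Fin m) (Fin n) F)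
    (hcols : ∀ j, (fun i => H i j) ≠ 0)
    (hind : ∀ j₁ j₂, j₁ ≠ j₂ → ∀ c : F, (fun i => H i j₂) ≠ c • (fun i => H i j₁))
    (hn : n * (q - 1) = q ^ m - 1) :
    sSup {ρ : ℕ | ∃ v : Fin n → K,
        sInf {d : ℕ | ∃ c : Fin n → K,
          (H.map (algebraMap F K)).mulVec c = 0 ∧ hammingDist v c = d} = ρ} =
      min r m := by
  subst hq hrank
  have : Module.Finite F K := Module.finite_of_finrank_pos hr
  have hcover := exists_smul_col_eq H hm hcols hind hn
  have hbound (s : Fin m → K) : ∃ e, H.map (algebraMap F K) *ᵥ e = s ∧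
      hammingNorm e ≤ min (finrank F K) m := by
    simpa using exists_map_mulVec_eq_hammingNorm_le_min H hcover s
  have hle (v : Fin n → K) : sInf {d | ∃ c, H.map (algebraMap F K) *ᵥ c = 0 ∧
      hammingDist v c = d} ≤ min (finrank F K) m := by
    obtain ⟨e, he, hw⟩ := hbound (H.map (algebraMap F K) *ᵥ v)
    rw [setOf_hammingDist_ker_eq]
    exact le_trans (Nat.sInf_le ⟨e, he, rfl⟩) hw
  obtain ⟨s₀, hs₀⟩ := exists_min_finrank_le_finrank_span_range (F := F) (K := K) m
  obtain ⟨v₀, hv₀, -⟩ := hbound s₀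
  have hge : min (finrank F K) m ≤ sInf {d | ∃ c, H.map (algebraMap F K) *ᵥ c = 0 ∧
      hammingDist v₀ c = d} := by
    rw [setOf_hammingDist_ker_eq]
    refine le_csInf ⟨hammingNorm v₀, v₀, rfl, rfl⟩ ?_
    rintro _ ⟨e, he, rfl⟩
    exact hs₀.trans (hv₀ ▸ he ▸ finrank_span_range_map_mulVec_le H e)
  exact IsGreatest.csSup_eq ⟨⟨v₀, (hle v₀).antisymm hge⟩, fun _ ⟨v, hv⟩ => hv ▸ hle v⟩

/-- The covering radius of the lifted Hamming code `C_{(m,r)}` over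
`F_{q^r}` equals `min r m`. -/
theorem covering_radius_lifted_hamming {q m r n : ℕ} (hm : 1 ≤ m) (hr : 1 ≤ r)
    (F K : Type) [Field F] [Fintype F] [DecidableEq F]
    [Field K] [Fintype K] [DecidableEq K] [Algebra F K]
    (hq : Fintype.card F = q)
    (hrank : Module.finrank F K = r)
    (H : Matrix (Fin m) (Fin n) F)
    (hcols : ∀ j, (fun i => H i j) ≠ 0)
    (hind : ∀ j₁ j₂, j₁ ≠ j₂ → ∀ c : F, (fun i => H i j₂) ≠ c • (fun i => H i j₁))
    (hn : n * (q - 1) = q ^ m - 1) :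
    sSup {ρ : ℕ | ∃ v : Fin n → K,
        sInf {d : ℕ | ∃ c : Fin n → K,
          (H.map (algebraMap F K)).mulVec c = 0 ∧ hammingDist v c = d} = ρ} =
      min r m :=
  covering_radius_lifted_hamming_general hm hr F K hq hrank H hcols hind hn
end

section
/- Let C_{(m,r)} be the lift to F_{q^r} of the q-ary Hamming code with parity check matrix H_m, and for 0 ≤ i ≤ min{r,m} let C_{(m,r)}(i) = {x ∈ F_{q^r}^n : d(x, C_{(m,r)}) = i}. Then the number μ_i of cosets of C_{(m,r)} contained in C_{(m,r)}(i) equals M_q(i,r)·M_q(i,m)/M_q(i,i), where M_q(k,t) = (q^t−1)(q^t−q)⋯(q^t−q^{k−1}). -/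
/-!
The syndrome map `x ↦ H x` identifies the cosets of the lifted code with `K^m`. For a syndrome
`s`, let `W ⊆ K` be the `F`-span of its entries. Every word `w` with `H w = s` has `s` in the span
of its nonzero entries, so its weight is at least `dim W`. Conversely, writing
`s = ∑_{j < dim W} α_j • h_j` with `(α_j)` an `F`-basis of `W` and `h_j ∈ F^m`, each `h_j` is a
multiple of a column of the Hamming matrix, so `s` is the syndrome of a word of weight `dim W`.
Hence the cosets at distance `i` correspond to the `s ∈ K^m` whose entries span an `i`-dimensional
`F`-space. Grouping these by the span `W`, and counting the tuples spanning a given `i`-dimensional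
space by transposition, gives `#{s} · M_q(i,i) = M_q(i,r) · M_q(i,m)`.
-/

open Function Module Submodule Set Matrix

section SpanningTuples

variable {F V E ι : Type*} [Field F] [AddCommGroup V] [Module F V] [AddCommGroup E] [Module F E]

theorem span_range_comp_eq_range_iff {φ : E →ₗ[F] V} (hφ : Injective φ) (g : ι → E) :
    span F (range (φ ∘ g)) = LinearMap.range φ ↔ span F (range g) = ⊤ := by
  rw [range_comp, ← map_span, LinearMap.range_eq_map, (map_injective_of_injective hφ).eq_iff]

noncomputable def spanRangeEquivOfInjective {φ : E →ₗ[F] V} (hφ : Injective φ) :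
    {g : ι → E // span F (range g) = ⊤} ≃ {s : ι → V // span F (range s) = LinearMap.range φ} where
  toFun g := ⟨φ ∘ g.1, (span_range_comp_eq_range_iff hφ g.1).2 g.2⟩
  invFun s := ⟨fun c => (LinearEquiv.ofInjective φ hφ).symm
      ⟨s.1 c, s.2.le (subset_span (mem_range_self c))⟩, by
    refine (span_range_comp_eq_range_iff hφ _).1 (Eq.trans ?_ s.2)
    congr
    ext c
    exact LinearEquiv.ofInjective_symm_apply (h := hφ) φ _⟩
  left_inv g := by ext c; apply hφ; simp
  right_inv s := by ext; simp

theorem card_span_range_eq [FiniteDimensional F V] (W : Submodule F V) :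
    Nat.card {s : ι → V // span F (range s) = W} =
      Nat.card {g : ι → Fin (finrank F W) → F // span F (range g) = ⊤} := by
  let e := LinearEquiv.ofFinrankEq (Fin (finrank F W) → F) W (finrank_fin_fun F)
  have hφ : Injective (W.subtype ∘ₗ e.toLinearMap) := W.injective_subtype.comp e.injective
  have hrange : LinearMap.range (W.subtype ∘ₗ e.toLinearMap) = W := by
    rw [LinearMap.range_comp_of_range_eq_top _ e.range, range_subtype]
  exact (Nat.card_congr ((spanRangeEquivOfInjective hφ).trans
    (Equiv.subtypeEquivRight fun s => by rw [hrange]))).symm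

theorem card_finrank_span_range_eq_mul [Finite V] (ι : Type*) [Finite ι] (i : ℕ) :
    Nat.card {s : ι → V // finrank F (span F (range s)) = i} =
      Nat.card {W : Submodule F V // finrank F W = i} *
        Nat.card {g : ι → Fin i → F // span F (range g) = ⊤} := by
  classical
  have : Fintype (Submodule F V) := Fintype.ofFinite _
  let spanOf (s : {s : ι → V // finrank F (span F (range s)) = i}) :
      {W : Submodule F V // finrank F W = i} := ⟨span F (range s.1), s.2⟩
  rw [Nat.card_congr (Equiv.sigmaFiberEquiv spanOf).symm, Nat.card_sigma,
    Finset.sum_congr rfl fun W _ => ?_, Finset.sum_const, Finset.card_univ,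
    ← Nat.card_eq_fintype_card, smul_eq_mul]
  obtain ⟨W, rfl⟩ := W
  rw [← card_span_range_eq]
  exact Nat.card_congr ((Equiv.subtypeEquivRight fun _ => Subtype.ext_iff).trans
    ((Equiv.subtypeSubtypeEquivSubtypeInter _ (fun s => span F (range s) = W)).trans
      (Equiv.subtypeEquivRight fun _ => ⟨And.right, fun h => ⟨h ▸ rfl, h⟩⟩)))

end SpanningTuples

theorem finrank_span_range_transpose {F ι κ : Type*} [Field F] [Fintype ι] [Fintype κ]
    (A : Matrix ι κ F) : finrank F (span F (range Aᵀ)) = finrank F (span F (range A)) := by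
  have h := A.rank_transpose
  rwa [Matrix.rank_eq_finrank_span_row, Matrix.rank_eq_finrank_span_row] at h

section FiniteField

variable {F V : Type*} [Field F] [Fintype F] [AddCommGroup V] [Module F V] [Finite V]

theorem card_linearIndependent_eq_prod_range (k : ℕ) :
    Nat.card {s : Fin k → V // LinearIndependent F s} =
      ∏ j ∈ Finset.range k, (Fintype.card F ^ finrank F V - Fintype.card F ^ j) := by
  rcases le_or_gt k (finrank F V) with hk | hk
  · rw [card_linearIndependent hk, Fin.prod_univ_eq_prod_range
      (fun j => Fintype.card F ^ finrank F V - Fintype.card F ^ j)]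
  · have : IsEmpty {s : Fin k → V // LinearIndependent F s} :=
      ⟨fun s => hk.not_ge (by simpa using s.2.fintype_card_le_finrank)⟩
    rw [Nat.card_of_isEmpty, Finset.prod_eq_zero (Finset.mem_range.2 hk)
      (Nat.sub_self (Fintype.card F ^ finrank F V))]

theorem card_finrank_span_range_fin_self (k : ℕ) :
    Nat.card {s : Fin k → V // finrank F (span F (range s)) = k} =
      ∏ j ∈ Finset.range k, (Fintype.card F ^ finrank F V - Fintype.card F ^ j) := by
  rw [← card_linearIndependent_eq_prod_range]
  refine Nat.card_congr (Equiv.subtypeEquivRight fun s => ?_)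
  rw [linearIndependent_iff_card_eq_finrank_span, Fintype.card_fin, Set.finrank, eq_comm]

/-- A family `ι → F^i` spans iff its transpose, an `i`-tuple in `F^ι`, is linearly independent. -/
theorem card_span_range_eq_top (ι : Type*) [Fintype ι] (i : ℕ) :
    Nat.card {g : ι → Fin i → F // span F (range g) = ⊤} =
      ∏ j ∈ Finset.range i, (Fintype.card F ^ Fintype.card ι - Fintype.card F ^ j) := by
  have htop (g : ι → Fin i → F) : span F (range g) = ⊤ ↔ finrank F (span F (range g)) = i := by
    refine ⟨fun h => by rw [h, finrank_top, finrank_fin_fun], fun h => ?_⟩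
    exact Submodule.eq_top_of_finrank_eq (by rw [h, finrank_fin_fun])
  have htranspose : {g : ι → Fin i → F // finrank F (span F (range g)) = i} ≃
      {g : Fin i → ι → F // finrank F (span F (range g)) = i} :=
    (Matrix.transposeAddEquiv ι (Fin i) F).toEquiv.subtypeEquiv fun g => by
      rw [AddEquiv.toEquiv_eq_coe, AddEquiv.coe_toEquiv, Matrix.transposeAddEquiv_apply,
        finrank_span_range_transpose]
  rw [Nat.card_congr ((Equiv.subtypeEquivRight htop).trans htranspose),
    card_finrank_span_range_fin_self, Module.finrank_fintype_fun_eq_card]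

theorem card_finrank_span_range_mul (m i : ℕ) :
    Nat.card {s : Fin m → V // finrank F (span F (range s)) = i} *
        ∏ j ∈ Finset.range i, (Fintype.card F ^ i - Fintype.card F ^ j) =
      (∏ j ∈ Finset.range i, (Fintype.card F ^ finrank F V - Fintype.card F ^ j)) *
        ∏ j ∈ Finset.range i, (Fintype.card F ^ m - Fintype.card F ^ j) := by
  rw [← card_finrank_span_range_fin_self, card_finrank_span_range_eq_mul,
    card_finrank_span_range_eq_mul, card_span_range_eq_top, card_span_range_eq_top,
    Fintype.card_fin, Fintype.card_fin]
  ring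

end FiniteField

theorem hammingNorm_add_le_s9 {κ K : Type*} [Fintype κ] [AddGroup K] [DecidableEq K] (x y : κ → K) :
    hammingNorm (x + y) ≤ hammingNorm x + hammingNorm y := by
  simpa [hammingDist_eq_hammingNorm] using hammingDist_triangle (-x) 0 y

theorem hammingNorm_single_le_one {κ K : Type*} [Fintype κ] [DecidableEq κ] [Zero K]
    [DecidableEq K] (j : κ) (y : K) : hammingNorm (Pi.single j y : κ → K) ≤ 1 :=
  (Finset.card_le_card fun p hp => Finset.mem_singleton.2 (by
    by_contra h
    simp [Pi.single_apply, h] at hp)).trans (Finset.card_singleton j).le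

/-- The `n · (q - 1)` nonzero multiples of the columns are distinct, so they exhaust the
`q ^ m - 1` nonzero vectors. -/
theorem exists_eq_smul_col_of_card {m n : ℕ} {F : Type*} [Field F] [Fintype F]
    (H : Matrix (Fin m) (Fin n) F) (hcols : ∀ j, H.col j ≠ 0)
    (hind : ∀ j₁ j₂, j₁ ≠ j₂ → ∀ c : F, H.col j₂ ≠ c • H.col j₁)
    (hn : n * (Fintype.card F - 1) = Fintype.card F ^ m - 1) (u : Fin m → F) (hu : u ≠ 0) :
    ∃ j, ∃ a : F, u = a • H.col j := by
  classical
  let Φ : Fin n × Fˣ → {u : Fin m → F // u ≠ 0} := fun p =>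
    ⟨(p.2 : F) • H.col p.1, smul_ne_zero p.2.ne_zero (hcols p.1)⟩
  have hΦ : Injective Φ := by
    rintro ⟨j₁, a₁⟩ ⟨j₂, a₂⟩ h
    have h' : (a₁ : F) • H.col j₁ = (a₂ : F) • H.col j₂ := congrArg Subtype.val h
    by_cases hj : j₁ = j₂
    · subst hj
      exact Prod.ext rfl (Units.ext (smul_left_injective F (hcols j₁) h'))
    · refine absurd ?_ (hind j₁ j₂ hj ((a₂ : F)⁻¹ * a₁))
      rw [mul_smul, h', inv_smul_smul₀ a₂.ne_zero]
  have hcard : Fintype.card (Fin n × Fˣ) = Fintype.card {u : Fin m → F // u ≠ 0} := by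
    simp [Fintype.card_subtype_compl, Fintype.card_units, hn]
  obtain ⟨⟨j, a⟩, hja⟩ := ((Fintype.bijective_iff_injective_and_card Φ).2 ⟨hΦ, hcard⟩).2 ⟨u, hu⟩
  exact ⟨j, a, (congrArg Subtype.val hja).symm⟩

section Syndrome

variable {ι κ F K : Type*} [Fintype κ] [Field F] [Ring K] [Algebra F K] [DecidableEq K]
  (H : Matrix ι κ F)

theorem exists_hammingNorm_le_one_mulVec_eq_s9 (hcover : ∀ u ≠ 0, ∃ j, ∃ a : F, u = a • H.col j)
    (x : K) (u : ι → F) :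
    ∃ w : κ → K, hammingNorm w ≤ 1 ∧ H.map (algebraMap F K) *ᵥ w = fun c => u c • x := by
  classical
  by_cases hu : u = 0
  · exact ⟨0, by simp, by ext; simp [hu]⟩
  obtain ⟨j, a, rfl⟩ := hcover u hu
  refine ⟨Pi.single j (a • x), hammingNorm_single_le_one j _, ?_⟩
  ext c
  simp [Matrix.mulVec_single, ← Algebra.smul_def, smul_smul]

theorem exists_mulVec_eq_hammingNorm_le [Fintype ι]
    (hcover : ∀ u ≠ 0, ∃ j, ∃ a : F, u = a • H.col j) (s : ι → K) :
    ∃ w : κ → K, H.map (algebraMap F K) *ᵥ w = s ∧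
      hammingNorm w ≤ finrank F (span F (range s)) := by
  have := FiniteDimensional.span_of_finite F (finite_range s)
  let b := Module.finBasis F (span F (range s))
  let coord : Fin _ → ι → F := fun j c => b.repr ⟨s c, subset_span (mem_range_self c)⟩ j
  have hs : s = ∑ j, fun c => coord j c • (b j : K) := by
    ext c
    have := congrArg Subtype.val (b.sum_repr ⟨s c, subset_span (mem_range_self c)⟩)
    simp only [coe_sum, coe_smul] at this
    rw [Finset.sum_apply]
    exact this.symm
  choose w hw_norm hw_eq using
    fun j => exists_hammingNorm_le_one_mulVec_eq_s9 H hcover (b j : K) (coord j)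
  refine ⟨∑ j, w j, by rw [Matrix.mulVec_sum]; simp only [hw_eq]; exact hs.symm, ?_⟩
  calc hammingNorm (∑ j, w j) ≤ ∑ j, hammingNorm (w j) :=
        Finset.le_sum_of_subadditive _ hammingNorm_zero.le hammingNorm_add_le_s9 _ _
    _ ≤ ∑ _j : Fin _, 1 := Finset.sum_le_sum fun j _ => hw_norm j
    _ = finrank F (span F (range s)) := by simp

theorem finrank_span_range_mulVec_le [Finite ι] (w : κ → K) :
    finrank F (span F (range (H.map (algebraMap F K) *ᵥ w))) ≤ hammingNorm w := by
  classical
  let support := {p // w p ≠ 0}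
  have hmem (c : ι) : (H.map (algebraMap F K) *ᵥ w) c ∈ span F (range fun p : support => w p) :=
    Submodule.sum_mem _ fun p _ => by
      change algebraMap F K (H c p) * w p ∈ _
      rw [← Algebra.smul_def]
      by_cases hp : w p = 0
      · simp [hp]
      · exact smul_mem _ _ (subset_span ⟨⟨p, hp⟩, rfl⟩)
  have := FiniteDimensional.span_of_finite F (finite_range fun p : support => w p)
  calc _ ≤ finrank F (span F (range fun p : support => w p)) :=
        Submodule.finrank_mono (span_le.2 (range_subset_iff.2 hmem))
    _ ≤ Fintype.card support := finrank_range_le_card _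
    _ = hammingNorm w := by rw [Fintype.card_subtype]; rfl

theorem sInf_hammingDist_eq_finrank [Fintype ι]
    (hcover : ∀ u ≠ 0, ∃ j, ∃ a : F, u = a • H.col j) (v : κ → K) :
    sInf {d : ℕ | ∃ c : κ → K, H.map (algebraMap F K) *ᵥ c = 0 ∧ hammingDist v c = d} =
      finrank F (span F (range (H.map (algebraMap F K) *ᵥ v))) := by
  have hdist (c : κ → K) : hammingDist v c = hammingNorm (v - c) := by
    rw [hammingDist_comm, hammingDist_eq_hammingNorm, neg_add_eq_sub]
  obtain ⟨w, hw, hw_norm⟩ :=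
    exists_mulVec_eq_hammingNorm_le H hcover (H.map (algebraMap F K) *ᵥ v)
  have hmem : hammingNorm w ∈
      {d : ℕ | ∃ c : κ → K, H.map (algebraMap F K) *ᵥ c = 0 ∧ hammingDist v c = d} :=
    ⟨v - w, by rw [Matrix.mulVec_sub, hw, sub_self], by rw [hdist, sub_sub_cancel]⟩
  refine le_antisymm ((Nat.sInf_le hmem).trans hw_norm) (le_csInf ⟨_, hmem⟩ ?_)
  rintro d ⟨c, hc, rfl⟩
  have := finrank_span_range_mulVec_le H (v - c)
  rwa [Matrix.mulVec_sub, hc, sub_zero, ← hdist] at this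

end Syndrome

theorem card_cosets_at_distance_general {q m r n : ℕ}
    (F K : Type) [Field F] [Fintype F]
    [Field K] [Fintype K] [DecidableEq K] [Algebra F K]
    (hq : Fintype.card F = q)
    (hrank : Module.finrank F K = r)
    (H : Matrix (Fin m) (Fin n) F)
    (hcols : ∀ j, (fun i => H i j) ≠ 0)
    (hind : ∀ j₁ j₂, j₁ ≠ j₂ → ∀ c : F, (fun i => H i j₂) ≠ c • (fun i => H i j₁))
    (hn : n * (q - 1) = q ^ m - 1)
    (i : ℕ) :
    Nat.card {D : (Fin n → K) ⧸ LinearMap.ker ((H.map (algebraMap F K)).mulVecLin) //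
        ∀ v : Fin n → K, Submodule.Quotient.mk v = D →
          sInf {d : ℕ | ∃ c : Fin n → K,
            (H.map (algebraMap F K)).mulVec c = 0 ∧ hammingDist v c = d} = i} =
      (∏ j ∈ Finset.range i, (q ^ r - q ^ j)) *
        (∏ j ∈ Finset.range i, (q ^ m - q ^ j)) /
          (∏ j ∈ Finset.range i, (q ^ i - q ^ j)) := by
  subst hq hrank
  have hcover := exists_eq_smul_col_of_card H hcols hind hn
  let A := H.map (algebraMap F K)
  have hsurj : Surjective A.mulVecLin := fun s =>
    (exists_mulVec_eq_hammingNorm_le H hcover s).imp fun _ h => h.1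
  let e := (A.mulVecLin.quotKerEquivOfSurjective hsurj).toEquiv
  have hdist (D : (Fin n → K) ⧸ LinearMap.ker A.mulVecLin) :
      (∀ v : Fin n → K, Submodule.Quotient.mk v = D →
        sInf {d : ℕ | ∃ c : Fin n → K, A *ᵥ c = 0 ∧ hammingDist v c = d} = i) ↔
      finrank F (span F (range (e D))) = i := by
    have key (v : Fin n → K) (hv : Submodule.Quotient.mk v = D) :
        sInf {d : ℕ | ∃ c : Fin n → K, A *ᵥ c = 0 ∧ hammingDist v c = d} =
          finrank F (span F (range (e D))) := by
      rw [sInf_hammingDist_eq_finrank H hcover, ← hv]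
      rfl
    obtain ⟨v, hv⟩ := Submodule.Quotient.mk_surjective _ D
    exact ⟨fun h => key v hv ▸ h v hv, fun h v' hv' => (key v' hv').trans h⟩
  have hpos : 0 < ∏ j ∈ Finset.range i, (Fintype.card F ^ i - Fintype.card F ^ j) :=
    Finset.prod_pos fun j hj => Nat.sub_pos_of_lt
      (Nat.pow_lt_pow_right Fintype.one_lt_card (Finset.mem_range.1 hj))
  rw [Nat.card_congr (e.subtypeEquiv (q := fun s => finrank F (span F (range s)) = i) hdist)]
  exact (Nat.div_eq_of_eq_mul_left hpos (card_finrank_span_range_mul m i).symm).symm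

/-- The number `μ_i` of cosets of the lifted Hamming code `C_{(m,r)}`
consisting of vectors at distance `i` from the code equals `M_q(i,r)·M_q(i,m)/M_q(i,i)`. -/
theorem card_cosets_at_distance {q m r n : ℕ} (hm : 1 ≤ m) (hr : 1 ≤ r)
    (F K : Type) [Field F] [Fintype F] [DecidableEq F]
    [Field K] [Fintype K] [DecidableEq K] [Algebra F K]
    (hq : Fintype.card F = q)
    (hrank : Module.finrank F K = r)
    (H : Matrix (Fin m) (Fin n) F)
    (hcols : ∀ j, (fun i => H i j) ≠ 0)
    (hind : ∀ j₁ j₂, j₁ ≠ j₂ → ∀ c : F, (fun i => H i j₂) ≠ c • (fun i => H i j₁))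
    (hn : n * (q - 1) = q ^ m - 1)
    (i : ℕ) (hi : i ≤ min r m) :
    Nat.card {D : (Fin n → K) ⧸ LinearMap.ker ((H.map (algebraMap F K)).mulVecLin) //
        ∀ v : Fin n → K, Submodule.Quotient.mk v = D →
          sInf {d : ℕ | ∃ c : Fin n → K,
            (H.map (algebraMap F K)).mulVec c = 0 ∧ hammingDist v c = d} = i} =
      (∏ j ∈ Finset.range i, (q ^ r - q ^ j)) *
        (∏ j ∈ Finset.range i, (q ^ m - q ^ j)) /
          (∏ j ∈ Finset.range i, (q ^ i - q ^ j)) :=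
  card_cosets_at_distance_general F K hq hrank H hcols hind hn i
end
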